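/- arXiv:2312.12088 — 7 statements merged into one kernel-verified Lean document; each statement's English description precedes it below -/
import Mathlib

section
/- Let M be a positive bounded kernel on a measurable space X (M(x,·) a finite nonnegative measure, sup_x M(x,X) < ∞) such that m(x) := M(x,X) > 0 for all x. Suppose there exist c ∈ [0,1] and a probability measure ν with δ_x M(f) ≥ c·m(x)·ν(f) for all x and all bounded measurable f ≥ 0. Let g be a bounded positive measurable function with δ_x M(g) > 0 for all x, define the Markov kernel P by δ_x P f = δ_x M(f·g) / δ_x M(g), and suppose d ∈ [0,1] satisfies ν(g) ≥ d·‖g‖_∞. Then δ_x P f ≥ c·d·ν̃(f) for all x and f ≥ 0, where ν̃(f) = ν(f·g)/ν(g). -/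
open MeasureTheory ProbabilityTheory ENNReal

variable {X : Type*} [MeasurableSpace X]

/-- Doeblin minoration for the twisted (auxiliary) Markov kernel
`δₓ P f = δₓ M (f g) / δₓ M g`. -/
theorem twisted_kernel_doeblin
    (M : Kernel X X) [IsFiniteKernel M]
    (hm : ∀ x, 0 < (M x) Set.univ)
    (c : ℝ≥0∞) (hc : c ≤ 1)
    (ν : Measure X) [IsProbabilityMeasure ν]
    (hmin : ∀ x (f : X → ℝ≥0∞), Measurable f →
      c * ((M x) Set.univ) * ∫⁻ y, f y ∂ν ≤ ∫⁻ y, f y ∂(M x))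
    (g : X → ℝ≥0∞) (hg : Measurable g) (hgbdd : (⨆ x, g x) < ∞)
    (hMg : ∀ x, 0 < ∫⁻ y, g y ∂(M x))
    (hνg : 0 < ∫⁻ y, g y ∂ν)
    (d : ℝ≥0∞) (hd : d ≤ 1)
    (hdg : d * (⨆ x, g x) ≤ ∫⁻ y, g y ∂ν) :
    ∀ x (f : X → ℝ≥0∞), Measurable f →
      c * d * ((∫⁻ y, f y * g y ∂ν) / ∫⁻ y, g y ∂ν)
        ≤ (∫⁻ y, f y * g y ∂(M x)) / ∫⁻ y, g y ∂(M x) := by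
  intro x f hf
  set A := ∫⁻ y, f y * g y ∂ν with hA
  set B := ∫⁻ y, g y ∂ν with hB
  set C := ∫⁻ y, f y * g y ∂(M x) with hC
  set D := ∫⁻ y, g y ∂(M x) with hD
  have hBS : B ≤ ⨆ y, g y := by
    calc B ≤ ∫⁻ _, ⨆ y, g y ∂ν := lintegral_mono fun y => le_iSup g y
    _ = ⨆ y, g y := by simp
  have hB0 : B ≠ 0 := hνg.ne'
  have hBtop : B ≠ ∞ := (hBS.trans_lt hgbdd).ne
  have hD0 : D ≠ 0 := (hMg x).ne'
  have hDS : D ≤ (⨆ y, g y) * (M x) Set.univ := by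
    calc D ≤ ∫⁻ _, ⨆ y, g y ∂(M x) := lintegral_mono fun y => le_iSup g y
    _ = (⨆ y, g y) * (M x) Set.univ := lintegral_const _
  have hDtop : D ≠ ∞ :=
    (hDS.trans_lt (ENNReal.mul_lt_top hgbdd (measure_lt_top _ _))).ne
  rw [ENNReal.le_div_iff_mul_le (Or.inl hD0) (Or.inl hDtop)]
  have key : c * d * (A / B) * D ≤ c * ((M x) Set.univ) * A := by
    have h1 : d * D ≤ (M x) Set.univ * B := by
      calc d * D ≤ d * ((⨆ y, g y) * (M x) Set.univ) := mul_le_mul_right hDS d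
      _ = (d * ⨆ y, g y) * (M x) Set.univ := by ring
      _ ≤ B * (M x) Set.univ := mul_le_mul_left hdg _
      _ = (M x) Set.univ * B := mul_comm _ _
    calc c * d * (A / B) * D = c * (A / B) * (d * D) := by ring
    _ ≤ c * (A / B) * ((M x) Set.univ * B) := mul_le_mul_right h1 _
    _ = c * ((M x) Set.univ) * (A / B * B) := by ring
    _ = c * ((M x) Set.univ) * A := by rw [ENNReal.div_mul_cancel hB0 hBtop]
  exact key.trans (hmin x (fun y => f y * g y) (hf.mul hg))
end

section
/- Let M_0, …, M_{n-1} be positive bounded kernels on X with all masses m_{k,n}(x) = (M_k⋯M_{n-1}1)(x) positive, and suppose for each k there exist c_k ∈ [0,1] and probability measures ν_k with δ_x M_k(f) ≥ c_k m_{k,k+1}(x) ν_k(f) for all x, f ≥ 0, and d_{k+1} ∈ [0,1] with ν_k(m_{k+1,n}) ≥ d_{k+1} sup_x m_{k+1,n}(x) for all n ≥ k+1. Set γ_i = c_i d_{i+1}. Then for any nonzero finite positive measures μ_1, μ_2 on X and any k ≤ n, ‖μ_1·M_{k,n} − μ_2·M_{k,n}‖_TV ≤ 2 ∏_{i=k}^{n-1}(1−γ_i),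 where μ·M denotes the normalized measure μM/‖μM‖_TV. -/
open MeasureTheory ProbabilityTheory ENNReal

variable {X : Type*} [MeasurableSpace X]

/-- Total variation norm of the difference of two (finite) measures. -/
noncomputable def tvNorm (μ ν : Measure X) : ℝ≥0∞ :=
  (⨆ (A : Set X) (_ : MeasurableSet A), μ A - ν A)
    + (⨆ (A : Set X) (_ : MeasurableSet A), ν A - μ A)

/-- `seqApply M k j μ = μ M_k M_{k+1} ⋯ M_{k+j-1}`. -/
noncomputable def seqApply (M : ℕ → Kernel X X) (k : ℕ) : ℕ → Measure X → Measure X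
  | 0, μ => μ
  | j + 1, μ => (seqApply M k j μ).bind (fun x => M (k + j) x)

/-!
The projective image `μ·M_{k,n}` is the image of the probability `μ` reweighted by `m_{k,n}`
and normalized, under the Markov kernel `x ↦ δ_x·M_{k,n}`. This normalized kernel
factors into one-step Markov kernels, the `i`-th being `M_i` reweighted by `m_{i+1,n}` and
normalized. The minorization of `M_i` and the bound `ν_i(m_{i+1,n}) ≥ d_{i+1} sup m_{i+1,n}`
give that step a Doeblin minorization by `γ_i` times a probability measure, so it contracts the
total variation distance of probability measures by `1 - γ_i` (Dobrushin). The initial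
distance is at most `2`.
-/

open Set

section Normalize

variable {Y W : Type*} [MeasurableSpace Y] [MeasurableSpace W]

noncomputable def MeasureTheory.Measure.normalize (μ : Measure X) : Measure X :=
  (μ univ)⁻¹ • μ

namespace MeasureTheory.Measure

lemma normalize_apply (μ : Measure X) (A : Set X) : μ.normalize A = (μ univ)⁻¹ * μ A := rfl

lemma lintegral_normalize (μ : Measure X) (f : X → ℝ≥0∞) :
    ∫⁻ x, f x ∂μ.normalize = (μ univ)⁻¹ * ∫⁻ x, f x ∂μ :=
  lintegral_smul_measure _ _

lemma isProbabilityMeasure_normalize {μ : Measure X} (h0 : μ univ ≠ 0)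
    (htop : μ univ ≠ ∞) : IsProbabilityMeasure μ.normalize :=
  ⟨ENNReal.inv_mul_cancel h0 htop⟩

lemma isProbabilityMeasure_normalize_withDensity {μ : Measure X} {h : X → ℝ≥0∞}
    (h0 : ∫⁻ x, h x ∂μ ≠ 0) (htop : ∫⁻ x, h x ∂μ ≠ ∞) :
    IsProbabilityMeasure (μ.withDensity h).normalize := by
  rw [← setLIntegral_univ, ← withDensity_apply _ .univ] at h0 htop
  exact isProbabilityMeasure_normalize h0 htop

end MeasureTheory.Measure

noncomputable def ProbabilityTheory.Kernel.normalize (κ : Kernel X Y) : Kernel X Y where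
  toFun x := (κ x).normalize
  measurable' := Measure.measurable_of_measurable_coe _ fun _ hA =>
    (κ.measurable_coe .univ).inv.mul (κ.measurable_coe hA)

namespace ProbabilityTheory.Kernel

lemma normalize_apply (κ : Kernel X Y) (x : X) : κ.normalize x = (κ x).normalize := rfl

lemma isMarkovKernel_normalize {κ : Kernel X Y} (h0 : ∀ x, κ x univ ≠ 0)
    (htop : ∀ x, κ x univ ≠ ∞) : IsMarkovKernel κ.normalize :=
  ⟨fun x => Measure.isProbabilityMeasure_normalize (h0 x) (htop x)⟩

lemma normalize_id : (Kernel.id : Kernel X X).normalize = Kernel.id := by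
  ext1 x
  rw [normalize_apply, Measure.normalize, id_apply, measure_univ, inv_one, one_smul]

end ProbabilityTheory.Kernel

theorem MeasureTheory.Measure.normalize_comp (μ : Measure X) {κ : Kernel X Y}
    (h0 : ∀ x, κ x univ ≠ 0) (htop : ∀ x, κ x univ ≠ ∞) :
    (κ ∘ₘ μ).normalize =
      κ.normalize ∘ₘ (μ.withDensity fun x => κ x univ).normalize := by
  have hmass : Measurable fun x => κ x univ := κ.measurable_coe .univ
  ext A hA
  rw [normalize_apply, bind_apply hA κ.aemeasurable, bind_apply .univ κ.aemeasurable,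
    bind_apply hA κ.normalize.aemeasurable, lintegral_normalize, withDensity_apply _ .univ,
    setLIntegral_univ, lintegral_withDensity_eq_lintegral_mul _ hmass
      (κ.normalize.measurable_coe hA)]
  congr 1
  refine lintegral_congr fun x => ?_
  rw [Pi.mul_apply, Kernel.normalize_apply, normalize_apply,
    ENNReal.mul_inv_cancel_left (h0 x) (htop x)]

theorem ProbabilityTheory.Kernel.normalize_comp (κ : Kernel Y W) (η : Kernel X Y)
    [IsSFiniteKernel η] (h0 : ∀ y, κ y univ ≠ 0) (htop : ∀ y, κ y univ ≠ ∞) :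
    (κ ∘ₖ η).normalize =
      κ.normalize ∘ₖ (η.withDensity fun _ y => κ y univ).normalize := by
  ext1 x
  rw [normalize_apply, comp_apply, comp_apply, normalize_apply,
    Kernel.withDensity_apply η (f := fun _ y => κ y univ)
      ((κ.measurable_coe .univ).comp measurable_snd),
    Measure.normalize_comp _ h0 htop]

end Normalize

section Dobrushin

variable {Y : Type*} [MeasurableSpace Y]

/-- `(μ - ν)⁺(X)` for finite measures. -/
noncomputable def posVariation (μ ν : Measure X) : ℝ≥0∞ :=
  ⨆ (A : Set X) (_ : MeasurableSet A), μ A - ν A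

lemma tvNorm_eq_posVariation_add (μ ν : Measure X) :
    tvNorm μ ν = posVariation μ ν + posVariation ν μ := rfl

lemma posVariation_le_one (μ ν : Measure X) [IsProbabilityMeasure μ] :
    posVariation μ ν ≤ 1 :=
  iSup₂_le fun _ _ => tsub_le_self.trans prob_le_one

/-- Layer cake: `∫ g dρ = ∫₀ᵗ ρ{g ≥ s} ds`, and each level set contributes at most
`posVariation μ ν` to the difference. -/
lemma lintegral_sub_lintegral_le_mul_posVariation (μ ν : Measure X) {g : X → ℝ≥0∞}
    (hg : Measurable g) {t : ℝ≥0∞} (ht : t ≠ ∞) (hgt : ∀ x, g x ≤ t) :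
    ∫⁻ x, g x ∂μ - ∫⁻ x, g x ∂ν ≤ t * posVariation μ ν := by
  set f : X → ℝ := fun x => (g x).toReal
  have hf : Measurable f := hg.ennreal_toReal
  have hlevel : ∀ s : ℝ, MeasurableSet {x | s ≤ f x} := fun s => hf measurableSet_Ici
  have hlayer (ρ : Measure X) : ∫⁻ x, g x ∂ρ = ∫⁻ s in Ioi 0, ρ {x | s ≤ f x} := by
    rw [← lintegral_eq_lintegral_meas_le ρ (.of_forall fun _ => toReal_nonneg) hf.aemeasurable]
    exact lintegral_congr fun x => (ofReal_toReal ((hgt x).trans_lt ht.lt_top).ne).symm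
  have hν : Measurable fun s : ℝ => ν {x | s ≤ f x} :=
    Antitone.measurable fun _ _ hst => measure_mono fun _ hx => hst.trans hx
  have hempty : ∀ s, t.toReal < s → {x | s ≤ f x} = ∅ := fun s hs =>
    eq_empty_of_forall_notMem fun x hx => (toReal_mono ht (hgt x)).not_gt (hs.trans_le hx)
  calc ∫⁻ x, g x ∂μ - ∫⁻ x, g x ∂ν
      ≤ ∫⁻ s in Ioi 0, (μ {x | s ≤ f x} - ν {x | s ≤ f x}) := by
        rw [hlayer μ, hlayer ν]
        exact lintegral_sub_le _ _ hν
    _ ≤ ∫⁻ s in Ioi 0, (Ioc 0 t.toReal).indicator (fun _ => posVariation μ ν) s := by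
        refine setLIntegral_mono (measurable_const.indicator measurableSet_Ioc) fun s hs => ?_
        by_cases hst : s ≤ t.toReal
        · rw [indicator_of_mem (show s ∈ Ioc 0 t.toReal from ⟨hs, hst⟩)]
          exact le_iSup₂ (f := fun A (_ : MeasurableSet A) => μ A - ν A) _ (hlevel s)
        · rw [hempty s (not_le.1 hst)]
          simp
    _ = t * posVariation μ ν := by
        rw [lintegral_indicator measurableSet_Ioc, setLIntegral_const,
          Measure.restrict_apply' measurableSet_Ioi,
          inter_eq_self_of_subset_left Ioc_subset_Ioi_self,
          Real.volume_Ioc, sub_zero, ofReal_toReal ht, mul_comm]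

lemma lintegral_sub_lintegral_le_mul_posVariation_of_le_of_le (μ ν : Measure X)
    [IsProbabilityMeasure μ] [IsProbabilityMeasure ν] {q : X → ℝ≥0∞} (hq : Measurable q)
    {a t : ℝ≥0∞} (ht : t ≠ ∞) (haq : ∀ x, a ≤ q x) (hqa : ∀ x, q x ≤ a + t) :
    ∫⁻ x, q x ∂μ - ∫⁻ x, q x ∂ν ≤ t * posVariation μ ν := by
  have hshift (ρ : Measure X) [IsProbabilityMeasure ρ] :
      ∫⁻ x, q x ∂ρ = ∫⁻ x, q x - a ∂ρ + a := by
    calc ∫⁻ x, q x ∂ρ = ∫⁻ x, (q x - a) + a ∂ρ :=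
          lintegral_congr fun x => (tsub_add_cancel_of_le (haq x)).symm
      _ = ∫⁻ x, q x - a ∂ρ + a := by
          rw [lintegral_add_right _ measurable_const, lintegral_const, measure_univ, mul_one]
  rw [hshift μ, hshift ν]
  exact add_tsub_add_le_tsub_right.trans <|
    lintegral_sub_lintegral_le_mul_posVariation μ ν (hq.sub measurable_const) ht
      fun x => tsub_le_iff_left.2 (hqa x)

/-- Doeblin's minorization gives Dobrushin's contraction: `Q x` splits as `γ ρ` plus a
sub-probability of mass `1 - γ`, and only the latter feels the difference of the inputs. -/
theorem posVariation_comp_le_of_minorization {Q : Kernel X Y} [IsMarkovKernel Q]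
    {ρ : Measure Y} [IsProbabilityMeasure ρ] {γ : ℝ≥0∞}
    (hQ : ∀ x B, MeasurableSet B → γ * ρ B ≤ Q x B) (μ ν : Measure X)
    [IsProbabilityMeasure μ] [IsProbabilityMeasure ν] :
    posVariation (Q ∘ₘ μ) (Q ∘ₘ ν) ≤ (1 - γ) * posVariation μ ν := by
  obtain ⟨x₀⟩ := nonempty_of_isProbabilityMeasure μ
  have hγ : γ ≤ 1 := by simpa using hQ x₀ univ .univ
  have hupper : ∀ x B, MeasurableSet B → Q x B ≤ γ * ρ B + (1 - γ) := fun x B hB =>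
    calc Q x B = 1 - Q x Bᶜ := by
          rw [prob_compl_eq_one_sub hB, ENNReal.sub_sub_cancel one_ne_top prob_le_one]
      _ ≤ 1 - γ * (1 - ρ B) := by
          rw [← prob_compl_eq_one_sub hB]
          exact tsub_le_tsub_left (hQ x _ hB.compl) 1
      _ = 1 - (γ - γ * ρ B) := by
          rw [ENNReal.mul_sub fun _ _ => ne_top_of_le_ne_top one_ne_top hγ, mul_one]
      _ ≤ γ * ρ B + (1 - γ) := tsub_tsub_le_tsub_add.trans_eq (add_comm _ _)
  refine iSup₂_le fun B hB => ?_
  rw [Measure.bind_apply hB Q.aemeasurable, Measure.bind_apply hB Q.aemeasurable]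
  exact lintegral_sub_lintegral_le_mul_posVariation_of_le_of_le μ ν (Q.measurable_coe hB)
    (tsub_le_self.trans_lt one_lt_top).ne (fun x => hQ x B hB) (fun x => hupper x B hB)

end Dobrushin

section Reweighting

variable {Y : Type*} [MeasurableSpace Y]

lemma ProbabilityTheory.Kernel.lintegral_apply_univ_ne_top (κ : Kernel X Y) [IsFiniteKernel κ]
    (μ : Measure X) [IsFiniteMeasure μ] : ∫⁻ x, κ x univ ∂μ ≠ ∞ := by
  rw [← Measure.bind_apply .univ κ.aemeasurable]
  exact measure_ne_top _ _

lemma ProbabilityTheory.Kernel.lintegral_apply_univ_ne_zero {κ : Kernel X Y}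
    (h0 : ∀ x, κ x univ ≠ 0) {μ : Measure X} (hμ : μ ≠ 0) :
    ∫⁻ x, κ x univ ∂μ ≠ 0 := by
  rw [← pos_iff_ne_zero, lintegral_pos_iff_support (κ.measurable_coe .univ),
    Function.support_eq_univ h0]
  exact Measure.measure_univ_pos.2 hμ

lemma smul_normalize_withDensity_le_normalize_withDensity {μ ν : Measure X} {h : X → ℝ≥0∞}
    (hh : Measurable h) {c d : ℝ≥0∞}
    (hmin : ∀ f : X → ℝ≥0∞, Measurable f →
      c * μ univ * ∫⁻ x, f x ∂ν ≤ ∫⁻ x, f x ∂μ)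
    (hmaj : d * ⨆ x, h x ≤ ∫⁻ x, h x ∂ν)
    (hμ0 : ∫⁻ x, h x ∂μ ≠ 0) (hμtop : ∫⁻ x, h x ∂μ ≠ ∞)
    (hν0 : ∫⁻ x, h x ∂ν ≠ 0) (hνtop : ∫⁻ x, h x ∂ν ≠ ∞)
    {B : Set X} (hB : MeasurableSet B) :
    c * d * (ν.withDensity h).normalize B ≤ (μ.withDensity h).normalize B := by
  set H := ∫⁻ x, h x ∂μ
  set Z := ∫⁻ x, h x ∂ν
  have hmass : ∀ ρ : Measure X, ρ.withDensity h univ = ∫⁻ x, h x ∂ρ := fun ρ => by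
    rw [withDensity_apply _ .univ, setLIntegral_univ]
  have hminB : c * μ univ * ν.withDensity h B ≤ μ.withDensity h B := by
    simpa only [lintegral_indicator hB, withDensity_apply _ hB] using hmin _ (hh.indicator hB)
  have hH : d * H ≤ Z * μ univ := calc
    d * H ≤ d * ∫⁻ _, ⨆ x, h x ∂μ := by gcongr; exact lintegral_mono fun y => le_iSup h y
    _ = d * (⨆ x, h x) * μ univ := by rw [lintegral_const, mul_assoc]
    _ ≤ Z * μ univ := by gcongr
  rw [Measure.normalize_apply, Measure.normalize_apply, hmass, hmass]
  calc c * d * (Z⁻¹ * ν.withDensity h B)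
      = H⁻¹ * H * (c * d * (Z⁻¹ * ν.withDensity h B)) := by
        rw [ENNReal.inv_mul_cancel hμ0 hμtop, one_mul]
    _ = H⁻¹ * Z⁻¹ * (c * (d * H) * ν.withDensity h B) := by ring
    _ ≤ H⁻¹ * Z⁻¹ * (c * (Z * μ univ) * ν.withDensity h B) := by gcongr
    _ = H⁻¹ * (Z⁻¹ * Z) * (c * μ univ * ν.withDensity h B) := by ring
    _ ≤ H⁻¹ * μ.withDensity h B := by
        rw [ENNReal.inv_mul_cancel hν0 hνtop, mul_one]
        gcongr

end Reweighting

section Sequence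

variable (M : ℕ → Kernel X X)

/-- `seqKernel M k j = M_{k,k+j}`. -/
noncomputable def seqKernel (k : ℕ) : ℕ → Kernel X X
  | 0 => Kernel.id
  | j + 1 => M (k + j) ∘ₖ seqKernel k j

lemma seqApply_eq_comp (k j : ℕ) (μ : Measure X) :
    seqApply M k j μ = seqKernel M k j ∘ₘ μ := by
  induction j with
  | zero => exact Measure.id_comp.symm
  | succ j ih => rw [seqApply, ih]; exact Measure.comp_assoc

lemma seqApply_dirac (k j : ℕ) (x : X) :
    seqApply M k j (Measure.dirac x) = seqKernel M k j x := by
  rw [seqApply_eq_comp, Measure.dirac_bind (Kernel.measurable _)]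

lemma seqKernel_succ' (k j : ℕ) : seqKernel M k (j + 1) = seqKernel M (k + 1) j ∘ₖ M k := by
  induction j with
  | zero => simp [seqKernel]
  | succ j ih =>
    rw [seqKernel, ih, ← Kernel.comp_assoc, show k + (j + 1) = k + 1 + j by omega]
    rfl

lemma lintegral_seqKernel_apply_univ (k j : ℕ) (x : X) :
    ∫⁻ y, seqKernel M (k + 1) j y univ ∂(M k x) = seqKernel M k (j + 1) x univ := by
  rw [seqKernel_succ', Kernel.comp_apply' _ _ _ .univ]

variable [∀ i, IsFiniteKernel (M i)]

instance isFiniteKernel_seqKernel (k j : ℕ) : IsFiniteKernel (seqKernel M k j) := by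
  induction j with
  | zero => exact inferInstanceAs (IsFiniteKernel Kernel.id)
  | succ j ih => exact inferInstanceAs (IsFiniteKernel (M (k + j) ∘ₖ _))

noncomputable def twistedKernel (k j : ℕ) : Kernel X X :=
  (M k).withDensity fun _ y => seqKernel M (k + 1) j y univ

lemma twistedKernel_apply (k j : ℕ) (x : X) :
    twistedKernel M k j x = (M k x).withDensity fun y => seqKernel M (k + 1) j y univ :=
  Kernel.withDensity_apply _ (f := fun _ y => seqKernel M (k + 1) j y univ)
    ((Kernel.measurable_coe _ .univ).comp measurable_snd) x

lemma twistedKernel_apply_univ (k j : ℕ) (x : X) :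
    twistedKernel M k j x univ = seqKernel M k (j + 1) x univ := by
  rw [twistedKernel_apply, withDensity_apply _ .univ, setLIntegral_univ,
    lintegral_seqKernel_apply_univ]

lemma normalize_seqKernel_succ (hpos : ∀ k j x, seqKernel M k j x univ ≠ 0) (k j : ℕ) :
    (seqKernel M k (j + 1)).normalize =
      (seqKernel M (k + 1) j).normalize ∘ₖ (twistedKernel M k j).normalize := by
  rw [seqKernel_succ', Kernel.normalize_comp _ _ (hpos _ _) fun y => measure_ne_top _ _]
  rfl

end Sequence

structure DoeblinCondition (M : ℕ → Kernel X X) (c d : ℕ → ℝ≥0∞)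
    (ν : ℕ → Measure X) : Prop where
  mass_ne_zero : ∀ k j x, seqKernel M k j x univ ≠ 0
  minorization : ∀ k x (f : X → ℝ≥0∞), Measurable f →
    c k * M k x univ * ∫⁻ y, f y ∂ν k ≤ ∫⁻ y, f y ∂M k x
  iSup_mass_le_lintegral : ∀ k j, d (k + 1) * ⨆ x, seqKernel M (k + 1) j x univ
    ≤ ∫⁻ x, seqKernel M (k + 1) j x univ ∂ν k

section Contraction

variable {M : ℕ → Kernel X X} [∀ i, IsFiniteKernel (M i)] {c d : ℕ → ℝ≥0∞}
  {ν : ℕ → Measure X} [∀ k, IsProbabilityMeasure (ν k)]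

lemma isMarkovKernel_normalize_twistedKernel (hpos : ∀ k j x, seqKernel M k j x univ ≠ 0)
    (k j : ℕ) : IsMarkovKernel (twistedKernel M k j).normalize :=
  Kernel.isMarkovKernel_normalize (fun x => twistedKernel_apply_univ M k j x ▸ hpos _ _ _)
    fun x => twistedKernel_apply_univ M k j x ▸ measure_ne_top _ _

lemma smul_normalize_withDensity_le_normalize_twistedKernel (h : DoeblinCondition M c d ν)
    (k j : ℕ) (x : X) {B : Set X} (hB : MeasurableSet B) :
    c k * d (k + 1) * ((ν k).withDensity fun y => seqKernel M (k + 1) j y univ).normalize B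
      ≤ (twistedKernel M k j).normalize x B := by
  rw [Kernel.normalize_apply, twistedKernel_apply]
  refine smul_normalize_withDensity_le_normalize_withDensity (Kernel.measurable_coe _ .univ)
    (h.minorization k x) (h.iSup_mass_le_lintegral k j) ?_ ?_
    (Kernel.lintegral_apply_univ_ne_zero (h.mass_ne_zero _ _)
      (IsProbabilityMeasure.ne_zero _)) (Kernel.lintegral_apply_univ_ne_top _ _) hB
  all_goals rw [lintegral_seqKernel_apply_univ]
  exacts [h.mass_ne_zero _ _ _, measure_ne_top _ _]

theorem posVariation_comp_normalize_seqKernel_le (h : DoeblinCondition M c d ν)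
    (j k : ℕ) (μ₁ μ₂ : Measure X) [IsProbabilityMeasure μ₁]
    [IsProbabilityMeasure μ₂] :
    posVariation ((seqKernel M k j).normalize ∘ₘ μ₁)
        ((seqKernel M k j).normalize ∘ₘ μ₂)
      ≤ (∏ i ∈ Finset.Ico k (k + j), (1 - c i * d (i + 1))) * posVariation μ₁ μ₂ := by
  induction j generalizing k μ₁ μ₂ with
  | zero => simp [seqKernel, Kernel.normalize_id]
  | succ j ih =>
    have := isMarkovKernel_normalize_twistedKernel h.mass_ne_zero k j
    have := Measure.isProbabilityMeasure_normalize_withDensity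
      (Kernel.lintegral_apply_univ_ne_zero (h.mass_ne_zero (k + 1) j)
        (IsProbabilityMeasure.ne_zero (ν k)))
      (Kernel.lintegral_apply_univ_ne_top _ _)
    rw [normalize_seqKernel_succ M h.mass_ne_zero, ← Measure.comp_assoc, ← Measure.comp_assoc]
    calc _ ≤ (∏ i ∈ Finset.Ico (k + 1) (k + 1 + j), (1 - c i * d (i + 1)))
          * posVariation ((twistedKernel M k j).normalize ∘ₘ μ₁)
              ((twistedKernel M k j).normalize ∘ₘ μ₂) := ih _ _ _
      _ ≤ (∏ i ∈ Finset.Ico (k + 1) (k + 1 + j), (1 - c i * d (i + 1)))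
          * ((1 - c k * d (k + 1)) * posVariation μ₁ μ₂) := by
        gcongr
        exact posVariation_comp_le_of_minorization
          (smul_normalize_withDensity_le_normalize_twistedKernel h k j) μ₁ μ₂
      _ = (∏ i ∈ Finset.Ico k (k + (j + 1)), (1 - c i * d (i + 1)))
          * posVariation μ₁ μ₂ := by
        rw [Finset.prod_eq_prod_Ico_succ_bot (show k < k + (j + 1) by omega),
          show k + (j + 1) = k + 1 + j by omega]
        ring

theorem posVariation_normalize_seqApply_le (h : DoeblinCondition M c d ν)
    (k j : ℕ) {μ₁ μ₂ : Measure X} [IsFiniteMeasure μ₁] [IsFiniteMeasure μ₂]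
    (h₁ : μ₁ ≠ 0) (h₂ : μ₂ ≠ 0) :
    posVariation (seqApply M k j μ₁).normalize (seqApply M k j μ₂).normalize
      ≤ ∏ i ∈ Finset.Ico k (k + j), (1 - c i * d (i + 1)) := by
  have hprob (μ : Measure X) [IsFiniteMeasure μ] (hμ : μ ≠ 0) :
      IsProbabilityMeasure (μ.withDensity fun x => seqKernel M k j x univ).normalize :=
    Measure.isProbabilityMeasure_normalize_withDensity
      (Kernel.lintegral_apply_univ_ne_zero (h.mass_ne_zero k j) hμ)
      (Kernel.lintegral_apply_univ_ne_top _ μ)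
  have := hprob μ₁ h₁
  have := hprob μ₂ h₂
  simp only [seqApply_eq_comp, Measure.normalize_comp _ (h.mass_ne_zero k j)
    fun x => measure_ne_top _ _]
  exact (posVariation_comp_normalize_seqKernel_le h j k _ _).trans
    (mul_le_of_le_one_right' (posVariation_le_one _ _))

end Contraction

theorem projective_contraction_general
    (M : ℕ → Kernel X X) (hfin : ∀ i, IsFiniteKernel (M i))
    (hpos : ∀ k j (x : X), 0 < (seqApply M k j (Measure.dirac x)) Set.univ)
    (c : ℕ → ℝ≥0∞)
    (ν : ℕ → Measure X) (hν : ∀ k, IsProbabilityMeasure (ν k))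
    (hmin : ∀ k x (f : X → ℝ≥0∞), Measurable f →
      c k * ((M k x) Set.univ) * ∫⁻ y, f y ∂(ν k) ≤ ∫⁻ y, f y ∂(M k x))
    (d : ℕ → ℝ≥0∞)
    (hmaj : ∀ k j,
      d (k + 1) * (⨆ x : X, (seqApply M (k + 1) j (Measure.dirac x)) Set.univ)
        ≤ ∫⁻ x, (seqApply M (k + 1) j (Measure.dirac x)) Set.univ ∂(ν k)) :
    ∀ (k n : ℕ), k ≤ n → ∀ (μ₁ μ₂ : Measure X),
      IsFiniteMeasure μ₁ → IsFiniteMeasure μ₂ → μ₁ ≠ 0 → μ₂ ≠ 0 →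
      tvNorm (((seqApply M k (n - k) μ₁) Set.univ)⁻¹ • seqApply M k (n - k) μ₁)
          (((seqApply M k (n - k) μ₂) Set.univ)⁻¹ • seqApply M k (n - k) μ₂)
        ≤ 2 * ∏ i ∈ Finset.Ico k n, (1 - c i * d (i + 1)) := by
  intro k n hkn μ₁ μ₂ _ _ h₁ h₂
  simp only [seqApply_dirac] at hpos hmaj
  have h : DoeblinCondition M c d ν := ⟨fun k j x => (hpos k j x).ne', hmin, hmaj⟩
  obtain ⟨j, rfl⟩ := Nat.exists_eq_add_of_le hkn
  rw [Nat.add_sub_cancel_left, tvNorm_eq_posVariation_add, two_mul]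
  exact add_le_add (posVariation_normalize_seqApply_le h k j h₁ h₂)
    (posVariation_normalize_seqApply_le h k j h₂ h₁)

/-- Projective contraction: `‖μ₁·M_{k,n} − μ₂·M_{k,n}‖_TV ≤ 2 ∏_{i=k}^{n-1} (1-γᵢ)`,
where `γᵢ = cᵢ d_{i+1}` come from the Doeblin-type minorations. -/
theorem projective_contraction
    (M : ℕ → Kernel X X) (hfin : ∀ i, IsFiniteKernel (M i))
    (hpos : ∀ k j (x : X), 0 < (seqApply M k j (Measure.dirac x)) Set.univ)
    (c : ℕ → ℝ≥0∞) (hc : ∀ k, c k ≤ 1)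
    (ν : ℕ → Measure X) (hν : ∀ k, IsProbabilityMeasure (ν k))
    (hmin : ∀ k x (f : X → ℝ≥0∞), Measurable f →
      c k * ((M k x) Set.univ) * ∫⁻ y, f y ∂(ν k) ≤ ∫⁻ y, f y ∂(M k x))
    (d : ℕ → ℝ≥0∞) (hd : ∀ k, d k ≤ 1)
    (hmaj : ∀ k j,
      d (k + 1) * (⨆ x : X, (seqApply M (k + 1) j (Measure.dirac x)) Set.univ)
        ≤ ∫⁻ x, (seqApply M (k + 1) j (Measure.dirac x)) Set.univ ∂(ν k)) :
    ∀ (k n : ℕ), k ≤ n → ∀ (μ₁ μ₂ : Measure X),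
      IsFiniteMeasure μ₁ → IsFiniteMeasure μ₂ → μ₁ ≠ 0 → μ₂ ≠ 0 →
      tvNorm (((seqApply M k (n - k) μ₁) Set.univ)⁻¹ • seqApply M k (n - k) μ₁)
          (((seqApply M k (n - k) μ₂) Set.univ)⁻¹ • seqApply M k (n - k) μ₂)
        ≤ 2 * ∏ i ∈ Finset.Ico k n, (1 - c i * d (i + 1)) :=
  projective_contraction_general M hfin hpos c ν hν hmin d hmaj
end

section
/- Under the same assumptions as the projective contraction result (kernels M_i with Doeblin-type constants γ_i = c_i d_{i+1}), for any k < n ≤ N and nonzero finite positive measures μ_1, μ_2, one has γ_{n-1} · | μ_1(m_{k,N})/μ_1(m_{k,n}) − μ_2(m_{k,N})/μ_2(m_{k,n}) | ≤ 2 (μ_2(m_{k,N})/μ_2(m_{k,n})) ∏_{i=k}^{n-1}(1−γ_i). -/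
/-!
Write `g_i = m_{i,N} / m_{i,n}` for `i ≤ n`. Since `m_{i,n}(x) = ∫ m_{i+1,n} dM_i(x)`, the value
`g_i(x)` is the average of `g_{i+1}` under the Doob transform of `M_i(x, ·)` by `m_{i+1,n}`, and
the two Doeblin conditions make all these transforms dominate one common measure of mass `γ_i`.
Hence the oscillation `sup g_i - inf g_i` shrinks by the factor `1 - γ_i` at each step, so
`osc g_k ≤ ∏ (1 - γ_i) · sup m_{n,N}`. Both ratios `μ_j(m_{k,N}) / μ_j(m_{k,n})` lie in
`[inf g_k, sup g_k]`, and the minorization at step `n - 1` gives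
`γ_{n-1} sup m_{n,N} ≤ μ₂(m_{k,N}) / μ₂(m_{k,n})`.
-/

open MeasureTheory ProbabilityTheory ENNReal

variable {X : Type*} [MeasurableSpace X]

section Oscillation

variable {α : Type*}

noncomputable def osc (h : α → ℝ≥0∞) : ℝ≥0∞ := (⨆ x, h x) - ⨅ x, h x

/-- Both measures dominate `E`, so the integrals differ only through the remainders `P - E` and
`Q - E`, each of mass `1 - E univ`. -/
theorem lintegral_sub_lintegral_le_mul_osc [MeasurableSpace α] {P Q E : Measure α}
    [IsProbabilityMeasure P] [IsProbabilityMeasure Q] (hP : E ≤ P) (hQ : E ≤ Q) (h : α → ℝ≥0∞) :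
    ∫⁻ x, h x ∂P - ∫⁻ x, h x ∂Q ≤ (1 - E Set.univ) * osc h := by
  have := isFiniteMeasure_of_le P hP
  have mass_sub : ∀ ρ : Measure α, IsProbabilityMeasure ρ → E ≤ ρ →
      (ρ - E) Set.univ = 1 - E Set.univ := fun ρ _ hρ => by
    rw [Measure.sub_apply MeasurableSet.univ hρ, measure_univ]
  have lintegral_split : ∀ ρ : Measure α, E ≤ ρ →
      ∫⁻ x, h x ∂ρ = ∫⁻ x, h x ∂E + ∫⁻ x, h x ∂(ρ - E) := fun ρ hρ => by
    rw [← lintegral_add_measure, add_comm, Measure.sub_add_cancel_of_le hρ]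
  calc ∫⁻ x, h x ∂P - ∫⁻ x, h x ∂Q
      ≤ ∫⁻ x, h x ∂(P - E) - ∫⁻ x, h x ∂(Q - E) := by
        rw [lintegral_split P hP, lintegral_split Q hQ]
        exact add_tsub_add_le_tsub_left
    _ ≤ ∫⁻ _, ⨆ x, h x ∂(P - E) - ∫⁻ _, ⨅ x, h x ∂(Q - E) :=
        tsub_le_tsub (lintegral_mono (le_iSup h)) (lintegral_mono (iInf_le h))
    _ = (1 - E Set.univ) * osc h := by
        rw [lintegral_const, lintegral_const, mass_sub P ‹_› hP, mass_sub Q ‹_› hQ, osc,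
          mul_comm (1 - E Set.univ), ENNReal.sub_mul fun _ _ => sub_ne_top one_ne_top]

theorem osc_le_mul_osc_of_eq_lintegral {β : Type*} [MeasurableSpace β] {h : α → ℝ≥0∞}
    {g : β → ℝ≥0∞} {P : α → Measure β} [∀ x, IsProbabilityMeasure (P x)] {E : Measure β}
    (hE : ∀ x, E ≤ P x) (hh : ∀ x, h x = ∫⁻ y, g y ∂(P x)) :
    osc h ≤ (1 - E Set.univ) * osc g := by
  rw [osc, tsub_le_iff_right]
  refine iSup_le fun x => ?_
  rw [ENNReal.add_iInf]
  refine le_iInf fun y => ?_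
  rw [← tsub_le_iff_right, hh x, hh y]
  exact lintegral_sub_lintegral_le_mul_osc (hE x) (hE y) g

theorem lintegral_div_lintegral_sub_le_osc [MeasurableSpace α] {f w : α → ℝ≥0∞}
    (hw : Measurable w) (hw₀ : ∀ x, w x ≠ 0) (hw_top : ∀ x, w x ≠ ∞) {μ₁ μ₂ : Measure α}
    (h₁ : ∫⁻ x, w x ∂μ₁ ≠ 0) (h₁_top : ∫⁻ x, w x ∂μ₁ ≠ ∞)
    (h₂ : ∫⁻ x, w x ∂μ₂ ≠ 0) (h₂_top : ∫⁻ x, w x ∂μ₂ ≠ ∞) :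
    (∫⁻ x, f x ∂μ₁) / ∫⁻ x, w x ∂μ₁ - (∫⁻ x, f x ∂μ₂) / ∫⁻ x, w x ∂μ₂ ≤ osc (f / w) := by
  have hf : ∀ x, f x = (f / w) x * w x := fun x =>
    (ENNReal.div_mul_cancel (hw₀ x) (hw_top x)).symm
  refine tsub_le_tsub ?_ ?_
  · rw [ENNReal.div_le_iff_le_mul (.inl h₁) (.inl h₁_top), ← lintegral_const_mul _ hw]
    exact lintegral_mono fun x => (hf x).trans_le (by gcongr; exact le_iSup (f / w) x)
  · rw [ENNReal.le_div_iff_mul_le (.inl h₂) (.inl h₂_top), ← lintegral_const_mul _ hw]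
    exact lintegral_mono fun x => (by gcongr; exact iInf_le (f / w) x : _ ≤ _).trans_eq (hf x).symm

end Oscillation

theorem le_prod_Ico_mul_of_le_mul {α : Type*} [CommMonoid α] [Preorder α] [MulLeftMono α]
    {a r : ℕ → α} {k n : ℕ} (hkn : k ≤ n) (h : ∀ i, k ≤ i → i < n → a i ≤ r i * a (i + 1)) :
    a k ≤ (∏ i ∈ Finset.Ico k n, r i) * a n := by
  induction n, hkn using Nat.le_induction with
  | base => simp
  | succ n hkn ih =>
    calc a k ≤ (∏ i ∈ Finset.Ico k n, r i) * a n := ih fun i hki hin => h i hki (by omega)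
      _ ≤ (∏ i ∈ Finset.Ico k n, r i) * (r n * a (n + 1)) :=
          mul_le_mul_right (h n hkn (by omega)) _
      _ = (∏ i ∈ Finset.Ico k (n + 1), r i) * a (n + 1) := by
          rw [Finset.prod_Ico_succ_top hkn, mul_assoc]

section NormalizedWithDensity

variable {α : Type*} [MeasurableSpace α]

noncomputable def normalizedWithDensity (μ : Measure α) (w : α → ℝ≥0∞) : Measure α :=
  (∫⁻ x, w x ∂μ)⁻¹ • μ.withDensity w

theorem normalizedWithDensity_apply (μ : Measure α) (w : α → ℝ≥0∞) {s : Set α}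
    (hs : MeasurableSet s) :
    normalizedWithDensity μ w s = (∫⁻ x, w x ∂μ)⁻¹ * ∫⁻ x in s, w x ∂μ := by
  rw [normalizedWithDensity, Measure.smul_apply, withDensity_apply _ hs, smul_eq_mul]

theorem isProbabilityMeasure_normalizedWithDensity {μ : Measure α} {w : α → ℝ≥0∞}
    (h₀ : ∫⁻ x, w x ∂μ ≠ 0) (h_top : ∫⁻ x, w x ∂μ ≠ ∞) :
    IsProbabilityMeasure (normalizedWithDensity μ w) :=
  ⟨by rw [normalizedWithDensity_apply _ _ MeasurableSet.univ, Measure.restrict_univ,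
    ENNReal.inv_mul_cancel h₀ h_top]⟩

theorem lintegral_normalizedWithDensity (μ : Measure α) {w f : α → ℝ≥0∞} (hw : Measurable w)
    (hf : Measurable f) :
    ∫⁻ x, f x ∂(normalizedWithDensity μ w) = (∫⁻ x, w x ∂μ)⁻¹ * ∫⁻ x, w x * f x ∂μ := by
  rw [normalizedWithDensity, lintegral_smul_measure, lintegral_withDensity_eq_lintegral_mul _ hw hf,
    smul_eq_mul]
  rfl

/-- A Doeblin minorization `c κ(univ) ν ≤ κ` survives reweighting by `w`, up to the factor `d`
by which `ν(w)` falls short of `sup w`. -/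
theorem smul_normalizedWithDensity_le {κ ν : Measure α} {w : α → ℝ≥0∞} {c d : ℝ≥0∞}
    (hw : Measurable w)
    (hmin : ∀ f : α → ℝ≥0∞, Measurable f → c * κ Set.univ * ∫⁻ x, f x ∂ν ≤ ∫⁻ x, f x ∂κ)
    (hmaj : d * ⨆ x, w x ≤ ∫⁻ x, w x ∂ν) (hν₀ : ∫⁻ x, w x ∂ν ≠ 0) (hν_top : ∫⁻ x, w x ∂ν ≠ ∞)
    (hκ₀ : ∫⁻ x, w x ∂κ ≠ 0) (hκ_top : ∫⁻ x, w x ∂κ ≠ ∞) :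
    (c * d) • normalizedWithDensity ν w ≤ normalizedWithDensity κ w := by
  refine Measure.le_iff.2 fun s hs => ?_
  rw [Measure.smul_apply, smul_eq_mul, normalizedWithDensity_apply _ _ hs,
    normalizedWithDensity_apply _ _ hs]
  set I := ∫⁻ x, w x ∂ν
  set J := ∫⁻ x, w x ∂κ
  have hJ : d * J ≤ κ Set.univ * I :=
    calc d * J ≤ d * ∫⁻ _, ⨆ x, w x ∂κ := by gcongr; exact lintegral_mono (le_iSup w)
      _ = κ Set.univ * (d * ⨆ x, w x) := by rw [lintegral_const]; ring
      _ ≤ κ Set.univ * I := by gcongr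
  have hs_min : c * κ Set.univ * ∫⁻ x in s, w x ∂ν ≤ ∫⁻ x in s, w x ∂κ := by
    simpa only [lintegral_indicator hs] using hmin _ (hw.indicator hs)
  calc c * d * (I⁻¹ * ∫⁻ x in s, w x ∂ν)
      = J⁻¹ * (c * (d * J) * I⁻¹ * ∫⁻ x in s, w x ∂ν) := by
        rw [← one_mul (c * d * _), ← ENNReal.inv_mul_cancel hκ₀ hκ_top]; ring
    _ ≤ J⁻¹ * (c * (κ Set.univ * I) * I⁻¹ * ∫⁻ x in s, w x ∂ν) := by gcongr
    _ = J⁻¹ * (c * κ Set.univ * ∫⁻ x in s, w x ∂ν) := by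
        rw [show c * (κ Set.univ * I) * I⁻¹ = c * κ Set.univ * (I * I⁻¹) by ring,
          ENNReal.mul_inv_cancel hν₀ hν_top, mul_one]
    _ ≤ J⁻¹ * ∫⁻ x in s, w x ∂κ := by gcongr

end NormalizedWithDensity

section Mass

variable (M : ℕ → Kernel X X)

noncomputable def iterKernel (k : ℕ) : ℕ → Kernel X X
  | 0 => Kernel.id
  | j + 1 => M (k + j) ∘ₖ iterKernel k j

instance isFiniteKernel_iterKernel [∀ i, IsFiniteKernel (M i)] (k j : ℕ) :
    IsFiniteKernel (iterKernel M k j) := by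
  induction j with
  | zero => dsimp only [iterKernel]; infer_instance
  | succ j ih => dsimp only [iterKernel]; infer_instance

theorem seqApply_eq_bind (k j : ℕ) (μ : Measure X) :
    seqApply M k j μ = μ.bind (iterKernel M k j) := by
  induction j with
  | zero =>
    change μ = μ.bind (fun x => Kernel.id x)
    simp only [Kernel.id_apply, Measure.bind_dirac]
  | succ j ih =>
    change (seqApply M k j μ).bind (M (k + j)) = μ.bind (fun x => (M (k + j) ∘ₖ iterKernel M k j) x)
    simp only [ih, Kernel.comp_apply]
    exact Measure.bind_bind (Kernel.aemeasurable _) (Kernel.aemeasurable _)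

theorem seqApply_add (j₁ j₂ k : ℕ) (μ : Measure X) :
    seqApply M k (j₁ + j₂) μ = seqApply M (k + j₁) j₂ (seqApply M k j₁ μ) := by
  induction j₂ with
  | zero => rfl
  | succ j₂ ih =>
    change (seqApply M k (j₁ + j₂) μ).bind (M (k + (j₁ + j₂)))
      = (seqApply M (k + j₁) j₂ (seqApply M k j₁ μ)).bind (M (k + j₁ + j₂))
    rw [ih, Nat.add_assoc]

/-- `mass M a b x` is the paper's `m_{a,b}(x)`, the total mass of `δ_x M_a ⋯ M_{b-1}`. -/
noncomputable def mass (a b : ℕ) (x : X) : ℝ≥0∞ := iterKernel M a (b - a) x Set.univ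

theorem seqApply_dirac_apply_univ (a b : ℕ) (x : X) :
    seqApply M a (b - a) (Measure.dirac x) Set.univ = mass M a b x := by
  rw [seqApply_eq_bind, Measure.dirac_bind (Kernel.measurable _), mass]

theorem measurable_mass (a b : ℕ) : Measurable (mass M a b) :=
  Kernel.measurable_coe _ MeasurableSet.univ

theorem mass_self (a : ℕ) (x : X) : mass M a a x = 1 := by
  simp [mass, iterKernel]

theorem mass_ne_top [∀ i, IsFiniteKernel (M i)] (a b : ℕ) (x : X) : mass M a b x ≠ ∞ :=
  measure_ne_top _ _

theorem lintegral_mass_ne_top [∀ i, IsFiniteKernel (M i)] (a b : ℕ) (μ : Measure X)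
    [IsFiniteMeasure μ] : ∫⁻ x, mass M a b x ∂μ ≠ ∞ :=
  (IsFiniteMeasure.lintegral_lt_top_of_bounded_to_ennreal μ
    ⟨(Kernel.bound (iterKernel M a (b - a))).toNNReal, fun x => by
      rw [coe_toNNReal (Kernel.bound_ne_top _)]
      exact Kernel.measure_le_bound _ x _⟩).ne

theorem lintegral_mass_ne_zero {a b : ℕ} (hpos : ∀ x, 0 < mass M a b x) {μ : Measure X}
    (hμ : μ ≠ 0) : ∫⁻ x, mass M a b x ∂μ ≠ 0 := by
  refine ((lintegral_pos_iff_support (measurable_mass M a b)).2 ?_).ne'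
  rw [Function.support_eq_univ fun x => (hpos x).ne']
  exact Measure.measure_univ_pos.2 hμ

theorem seqApply_apply_univ (a b : ℕ) (μ : Measure X) :
    seqApply M a (b - a) μ Set.univ = ∫⁻ x, mass M a b x ∂μ := by
  rw [seqApply_eq_bind, Measure.bind_apply MeasurableSet.univ (Kernel.aemeasurable _)]
  rfl

theorem seqApply_apply_univ_eq_lintegral_mass {a b e : ℕ} (hab : a ≤ b) (hbe : b ≤ e)
    (μ : Measure X) :
    seqApply M a (e - a) μ Set.univ = ∫⁻ x, mass M b e x ∂(seqApply M a (b - a) μ) := by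
  rw [show e - a = (b - a) + (e - b) by omega, seqApply_add, show a + (b - a) = b by omega,
    seqApply_apply_univ]

theorem mass_eq_lintegral {a b : ℕ} (hab : a < b) (x : X) :
    mass M a b x = ∫⁻ y, mass M (a + 1) b y ∂(M a x) := by
  rw [← seqApply_dirac_apply_univ,
    seqApply_apply_univ_eq_lintegral_mass M (Nat.le_add_right a 1) hab, Nat.add_sub_cancel_left]
  change ∫⁻ y, _ ∂((Measure.dirac x).bind (M (a + 0))) = _
  rw [Measure.dirac_bind (Kernel.measurable _)]
  rfl

end Mass

section GrowthRatio

variable {M : ℕ → Kernel X X}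

theorem div_mass_eq_lintegral [∀ i, IsFiniteKernel (M i)] (hpos : ∀ a b x, 0 < mass M a b x)
    {i n N : ℕ} (hin : i < n) (hnN : n ≤ N) (x : X) :
    (mass M i N / mass M i n) x = ∫⁻ y, (mass M (i + 1) N / mass M (i + 1) n) y
      ∂(normalizedWithDensity (M i x) (mass M (i + 1) n)) := by
  have hcancel : ∀ y, mass M (i + 1) n y * (mass M (i + 1) N / mass M (i + 1) n) y
      = mass M (i + 1) N y := fun y =>
    ENNReal.mul_div_cancel' (fun h => absurd h (hpos _ _ y).ne') fun h =>
      absurd h (mass_ne_top M _ _ y)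
  rw [lintegral_normalizedWithDensity _ (measurable_mass ..)
      ((measurable_mass ..).div (measurable_mass ..)), lintegral_congr hcancel,
    ← mass_eq_lintegral M hin, ← mass_eq_lintegral M (hin.trans_le hnN), Pi.div_apply,
    ENNReal.div_eq_inv_mul]

theorem osc_div_mass_le [∀ i, IsFiniteKernel (M i)] (hpos : ∀ a b x, 0 < mass M a b x)
    {i n N : ℕ} (hin : i < n) (hnN : n ≤ N) {ν : Measure X} [IsProbabilityMeasure ν] {c d : ℝ≥0∞}
    (hmin : ∀ x (f : X → ℝ≥0∞), Measurable f →
      c * M i x Set.univ * ∫⁻ y, f y ∂ν ≤ ∫⁻ y, f y ∂(M i x))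
    (hmaj : d * ⨆ x, mass M (i + 1) n x ≤ ∫⁻ x, mass M (i + 1) n x ∂ν) :
    osc (mass M i N / mass M i n) ≤ (1 - c * d) * osc (mass M (i + 1) N / mass M (i + 1) n) := by
  have hν₀ := lintegral_mass_ne_zero M (hpos (i + 1) n) (IsProbabilityMeasure.ne_zero ν)
  have hν_top := lintegral_mass_ne_top M (i + 1) n ν
  have hκ₀ : ∀ x, ∫⁻ y, mass M (i + 1) n y ∂(M i x) ≠ 0 := fun x =>
    mass_eq_lintegral M hin x ▸ (hpos i n x).ne'
  have hκ_top : ∀ x, ∫⁻ y, mass M (i + 1) n y ∂(M i x) ≠ ∞ := fun x =>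
    mass_eq_lintegral M hin x ▸ mass_ne_top M i n x
  have := fun x => isProbabilityMeasure_normalizedWithDensity (hκ₀ x) (hκ_top x)
  have := isProbabilityMeasure_normalizedWithDensity hν₀ hν_top
  have hE := fun x => smul_normalizedWithDensity_le (measurable_mass M (i + 1) n) (hmin x) hmaj
    hν₀ hν_top (hκ₀ x) (hκ_top x)
  simpa only [Measure.smul_apply, measure_univ, smul_eq_mul, mul_one] using
    osc_le_mul_osc_of_eq_lintegral hE (div_mass_eq_lintegral hpos hin hnN)

theorem osc_div_mass_le_prod_mul_iSup [∀ i, IsFiniteKernel (M i)]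
    (hpos : ∀ a b x, 0 < mass M a b x) {k n N : ℕ} (hkn : k ≤ n) (hnN : n ≤ N)
    {ν : ℕ → Measure X} [∀ i, IsProbabilityMeasure (ν i)] {c d : ℕ → ℝ≥0∞}
    (hmin : ∀ i x (f : X → ℝ≥0∞), Measurable f →
      c i * M i x Set.univ * ∫⁻ y, f y ∂(ν i) ≤ ∫⁻ y, f y ∂(M i x))
    (hmaj : ∀ i, d (i + 1) * ⨆ x, mass M (i + 1) n x ≤ ∫⁻ x, mass M (i + 1) n x ∂(ν i)) :
    osc (mass M k N / mass M k n) ≤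
      (∏ i ∈ Finset.Ico k n, (1 - c i * d (i + 1))) * ⨆ x, mass M n N x := by
  have hlast : mass M n N / mass M n n = mass M n N := by
    ext x
    rw [Pi.div_apply, mass_self, div_one]
  calc osc (mass M k N / mass M k n)
      ≤ (∏ i ∈ Finset.Ico k n, (1 - c i * d (i + 1))) * osc (mass M n N / mass M n n) :=
        le_prod_Ico_mul_of_le_mul (a := fun i => osc (mass M i N / mass M i n)) hkn
          fun i _ hin => osc_div_mass_le hpos hin hnN (hmin i) (hmaj i)
    _ ≤ (∏ i ∈ Finset.Ico k n, (1 - c i * d (i + 1))) * ⨆ x, mass M n N x := by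
        rw [hlast]
        exact mul_le_mul_right tsub_le_self _

theorem div_sub_div_le_osc_div_mass [∀ i, IsFiniteKernel (M i)]
    (hpos : ∀ a b x, 0 < mass M a b x) (k n N : ℕ) {μ μ' : Measure X} [IsFiniteMeasure μ]
    [IsFiniteMeasure μ'] (hμ : μ ≠ 0) (hμ' : μ' ≠ 0) :
    seqApply M k (N - k) μ Set.univ / seqApply M k (n - k) μ Set.univ
      - seqApply M k (N - k) μ' Set.univ / seqApply M k (n - k) μ' Set.univ
      ≤ osc (mass M k N / mass M k n) := by
  simp only [seqApply_apply_univ]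
  exact lintegral_div_lintegral_sub_le_osc (measurable_mass ..) (fun x => (hpos k n x).ne')
    (mass_ne_top M k n) (lintegral_mass_ne_zero M (hpos k n) hμ) (lintegral_mass_ne_top M k n μ)
    (lintegral_mass_ne_zero M (hpos k n) hμ') (lintegral_mass_ne_top M k n μ')

theorem mul_iSup_mass_le_div [∀ i, IsFiniteKernel (M i)] (hpos : ∀ a b x, 0 < mass M a b x)
    {k i N : ℕ} (hki : k ≤ i) (hiN : i + 1 ≤ N) {ν : Measure X} {c d : ℝ≥0∞}
    (hmin : ∀ x (f : X → ℝ≥0∞), Measurable f →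
      c * M i x Set.univ * ∫⁻ y, f y ∂ν ≤ ∫⁻ y, f y ∂(M i x))
    (hmaj : d * ⨆ x, mass M (i + 1) N x ≤ ∫⁻ x, mass M (i + 1) N x ∂ν) {μ : Measure X}
    [IsFiniteMeasure μ] (hμ : μ ≠ 0) :
    c * d * ⨆ x, mass M (i + 1) N x
      ≤ seqApply M k (N - k) μ Set.univ / seqApply M k (i + 1 - k) μ Set.univ := by
  have hpointwise (x : X) :
      c * d * (⨆ y, mass M (i + 1) N y) * mass M i (i + 1) x ≤ mass M i N x :=
    calc c * d * (⨆ y, mass M (i + 1) N y) * mass M i (i + 1) x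
        = c * M i x Set.univ * (d * ⨆ y, mass M (i + 1) N y) := by
          simp only [mass_eq_lintegral M (Nat.lt_succ_self i), mass_self, lintegral_one]; ring
      _ ≤ c * M i x Set.univ * ∫⁻ y, mass M (i + 1) N y ∂ν := by gcongr
      _ ≤ mass M i N x := (hmin x _ (measurable_mass ..)).trans_eq (mass_eq_lintegral M hiN x).symm
  rw [ENNReal.le_div_iff_mul_le (.inl ?_) (.inl ?_),
    seqApply_apply_univ_eq_lintegral_mass M hki (Nat.le_succ i),
    seqApply_apply_univ_eq_lintegral_mass M hki (Nat.le_of_succ_le hiN),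
    ← lintegral_const_mul _ (measurable_mass ..)]
  · exact lintegral_mono hpointwise
  · exact seqApply_apply_univ M k _ μ ▸ lintegral_mass_ne_zero M (hpos k _) hμ
  · exact seqApply_apply_univ M k _ μ ▸ lintegral_mass_ne_top M k _ μ

end GrowthRatio

theorem growth_ratio_contraction_general
    (M : ℕ → Kernel X X) (hfin : ∀ i, IsFiniteKernel (M i))
    (hpos : ∀ k j (x : X), 0 < (seqApply M k j (Measure.dirac x)) Set.univ)
    (c : ℕ → ℝ≥0∞)
    (ν : ℕ → Measure X) (hν : ∀ k, IsProbabilityMeasure (ν k))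
    (hmin : ∀ k x (f : X → ℝ≥0∞), Measurable f →
      c k * ((M k x) Set.univ) * ∫⁻ y, f y ∂(ν k) ≤ ∫⁻ y, f y ∂(M k x))
    (d : ℕ → ℝ≥0∞)
    (hmaj : ∀ k j,
      d (k + 1) * (⨆ x : X, (seqApply M (k + 1) j (Measure.dirac x)) Set.univ)
        ≤ ∫⁻ x, (seqApply M (k + 1) j (Measure.dirac x)) Set.univ ∂(ν k)) :
    ∀ (k n N : ℕ), k < n → n ≤ N → ∀ (μ₁ μ₂ : Measure X),
      IsFiniteMeasure μ₁ → IsFiniteMeasure μ₂ → μ₁ ≠ 0 → μ₂ ≠ 0 →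
      (c (n - 1) * d n) *
        (((seqApply M k (N - k) μ₁) Set.univ / (seqApply M k (n - k) μ₁) Set.univ
            - (seqApply M k (N - k) μ₂) Set.univ / (seqApply M k (n - k) μ₂) Set.univ)
          + ((seqApply M k (N - k) μ₂) Set.univ / (seqApply M k (n - k) μ₂) Set.univ
            - (seqApply M k (N - k) μ₁) Set.univ / (seqApply M k (n - k) μ₁) Set.univ))
        ≤ 2 * ((seqApply M k (N - k) μ₂) Set.univ / (seqApply M k (n - k) μ₂) Set.univ)
            * ∏ i ∈ Finset.Ico k n, (1 - c i * d (i + 1)) := by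
  intro k n N hkn hnN μ₁ μ₂ _ _ hμ₁ hμ₂
  have hmass_pos : ∀ a b x, 0 < mass M a b x := fun a b x => by
    simpa only [seqApply_dirac_apply_univ] using hpos a (b - a) x
  have hmaj_mass : ∀ i b, d (i + 1) * ⨆ x, mass M (i + 1) b x ≤ ∫⁻ x, mass M (i + 1) b x ∂(ν i) :=
    fun i b => by simpa only [seqApply_dirac_apply_univ] using hmaj i (b - (i + 1))
  obtain ⟨i, rfl⟩ : ∃ i, n = i + 1 := ⟨n - 1, by omega⟩
  have hosc := osc_div_mass_le_prod_mul_iSup hmass_pos hkn.le hnN hmin (hmaj_mass · (i + 1))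
  have hgrowth := mul_iSup_mass_le_div hmass_pos (Nat.le_of_lt_succ hkn) hnN (hmin i)
    (hmaj_mass i N) hμ₂
  set r₂ := seqApply M k (N - k) μ₂ Set.univ / seqApply M k (i + 1 - k) μ₂ Set.univ
  set ρ := ∏ j ∈ Finset.Ico k (i + 1), (1 - c j * d (j + 1))
  have hbound : c i * d (i + 1) * osc (mass M k N / mass M k (i + 1)) ≤ r₂ * ρ :=
    calc c i * d (i + 1) * osc (mass M k N / mass M k (i + 1))
        ≤ c i * d (i + 1) * (ρ * ⨆ x, mass M (i + 1) N x) := by gcongr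
      _ = ρ * (c i * d (i + 1) * ⨆ x, mass M (i + 1) N x) := by ring
      _ ≤ r₂ * ρ := by rw [mul_comm r₂]; gcongr
  rw [Nat.add_sub_cancel]
  calc c i * d (i + 1) * ((_ - r₂) + (r₂ - _))
      = c i * d (i + 1) * (_ - r₂) + c i * d (i + 1) * (r₂ - _) := mul_add ..
    _ ≤ r₂ * ρ + r₂ * ρ := add_le_add
        ((mul_le_mul_right (div_sub_div_le_osc_div_mass hmass_pos k _ N hμ₁ hμ₂) _).trans hbound)
        ((mul_le_mul_right (div_sub_div_le_osc_div_mass hmass_pos k _ N hμ₂ hμ₁) _).trans hbound)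
    _ = 2 * r₂ * ρ := by ring

/-- Contraction of growth-rate ratios:
`γ_{n-1} |μ₁(m_{k,N})/μ₁(m_{k,n}) − μ₂(m_{k,N})/μ₂(m_{k,n})|
  ≤ 2 (μ₂(m_{k,N})/μ₂(m_{k,n})) ∏_{i=k}^{n-1}(1-γᵢ)`,
absolute differences in `ℝ≥0∞` being `(a-b)+(b-a)`. -/
theorem growth_ratio_contraction
    (M : ℕ → Kernel X X) (hfin : ∀ i, IsFiniteKernel (M i))
    (hpos : ∀ k j (x : X), 0 < (seqApply M k j (Measure.dirac x)) Set.univ)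
    (c : ℕ → ℝ≥0∞) (hc : ∀ k, c k ≤ 1)
    (ν : ℕ → Measure X) (hν : ∀ k, IsProbabilityMeasure (ν k))
    (hmin : ∀ k x (f : X → ℝ≥0∞), Measurable f →
      c k * ((M k x) Set.univ) * ∫⁻ y, f y ∂(ν k) ≤ ∫⁻ y, f y ∂(M k x))
    (d : ℕ → ℝ≥0∞) (hd : ∀ k, d k ≤ 1)
    (hmaj : ∀ k j,
      d (k + 1) * (⨆ x : X, (seqApply M (k + 1) j (Measure.dirac x)) Set.univ)
        ≤ ∫⁻ x, (seqApply M (k + 1) j (Measure.dirac x)) Set.univ ∂(ν k)) :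
    ∀ (k n N : ℕ), k < n → n ≤ N → ∀ (μ₁ μ₂ : Measure X),
      IsFiniteMeasure μ₁ → IsFiniteMeasure μ₂ → μ₁ ≠ 0 → μ₂ ≠ 0 →
      (c (n - 1) * d n) *
        (((seqApply M k (N - k) μ₁) Set.univ / (seqApply M k (n - k) μ₁) Set.univ
            - (seqApply M k (N - k) μ₂) Set.univ / (seqApply M k (n - k) μ₂) Set.univ)
          + ((seqApply M k (N - k) μ₂) Set.univ / (seqApply M k (n - k) μ₂) Set.univ
            - (seqApply M k (N - k) μ₁) Set.univ / (seqApply M k (n - k) μ₁) Set.univ))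
        ≤ 2 * ((seqApply M k (N - k) μ₂) Set.univ / (seqApply M k (n - k) μ₂) Set.univ)
            * ∏ i ∈ Finset.Ico k n, (1 - c i * d (i + 1)) :=
  growth_ratio_contraction_general M hfin hpos c ν hν hmin d hmaj
end

section
/- Let M_0, …, M_{n-1} be positive bounded kernels on X. Suppose c_0 ∈ [0,1] and a probability measure ν_0 satisfy δ_x M_0(f) ≥ c_0 ‖δ_x M_0‖_TV ν_0(f) for all x and f ≥ 0, and d_1 ∈ [0,1] satisfies ν_0(m_{1,n}) ≥ d_1 sup_x m_{1,n}(x). Then for every finite positive measure μ and every n ≥ 1: c_0 d_1 · ‖μM_0‖_TV · sup_x m_{1,n}(x) ≤ ‖μ M_{0,n}‖_TV ≤ ‖μ M_0‖_TV · sup_x m_{1,n}(x). -/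
/-! The mass of `μ M_0 M_1 ⋯ M_{n-1}` is the integral of `m_{1,n}` against `μ M_0`. The upper
bound is then the trivial estimate of this integral by `‖μ M_0‖ sup m_{1,n}`; for the lower bound,
the minorization of `M_0` by `ν₀` and the comparison `ν₀(m_{1,n}) ≥ d₁ sup m_{1,n}` give
`δ_x M_0 (m_{1,n}) ≥ c₀ d₁ ‖δ_x M_0‖ sup m_{1,n}` for every `x`, which integrates against `μ`. -/

open MeasureTheory ProbabilityTheory ENNReal

variable {X : Type*} [MeasurableSpace X]

/-- The kernel `M_k M_{k+1} ⋯ M_{k+j-1}`. -/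
noncomputable def kernelSeq (M : ℕ → Kernel X X) (k : ℕ) : ℕ → Kernel X X
  | 0 => Kernel.id
  | j + 1 => M (k + j) ∘ₖ kernelSeq M k j

namespace seqApply

variable (M : ℕ → Kernel X X)

theorem succ_eq_seqApply_one (k j : ℕ) (μ : Measure X) :
    seqApply M k (j + 1) μ = seqApply M (k + 1) j (seqApply M k 1 μ) := by
  induction j with
  | zero => rfl
  | succ j ih =>
    change (seqApply M k (j + 1) μ).bind (M (k + (j + 1))) = _
    rw [ih, show k + (j + 1) = k + 1 + j by omega]
    rfl

theorem eq_bind_kernelSeq (k j : ℕ) (μ : Measure X) :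
    seqApply M k j μ = μ.bind (kernelSeq M k j) := by
  induction j with
  | zero => simp [seqApply, kernelSeq]
  | succ j ih =>
    change (seqApply M k j μ).bind (M (k + j)) = _
    rw [ih, Measure.bind_bind (kernelSeq M k j).aemeasurable (M (k + j)).aemeasurable]
    rfl

theorem dirac_eq_kernelSeq (k j : ℕ) (x : X) :
    seqApply M k j (Measure.dirac x) = kernelSeq M k j x := by
  rw [eq_bind_kernelSeq, Measure.dirac_bind (kernelSeq M k j).measurable]

theorem measurable_dirac_univ (k j : ℕ) :
    Measurable fun x ↦ seqApply M k j (Measure.dirac x) Set.univ := by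
  simp_rw [dirac_eq_kernelSeq]
  exact Kernel.measurable_coe _ MeasurableSet.univ

theorem univ_eq_lintegral (k j : ℕ) (μ : Measure X) :
    seqApply M k j μ Set.univ = ∫⁻ x, seqApply M k j (Measure.dirac x) Set.univ ∂μ := by
  simp_rw [dirac_eq_kernelSeq, eq_bind_kernelSeq]
  exact Measure.bind_apply MeasurableSet.univ (kernelSeq M k j).aemeasurable

end seqApply

theorem mul_bind_univ_le_lintegral_bind {Y : Type*} [MeasurableSpace Y] (κ : Kernel X Y)
    (μ : Measure X) {g : Y → ℝ≥0∞} (hg : Measurable g) {C : ℝ≥0∞}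
    (h : ∀ x, C * κ x Set.univ ≤ ∫⁻ y, g y ∂κ x) :
    C * μ.bind κ Set.univ ≤ ∫⁻ y, g y ∂μ.bind κ := by
  calc C * μ.bind κ Set.univ
      = ∫⁻ x, C * κ x Set.univ ∂μ := by
        rw [Measure.bind_apply MeasurableSet.univ κ.aemeasurable,
          lintegral_const_mul _ (κ.measurable_coe MeasurableSet.univ)]
    _ ≤ ∫⁻ x, ∫⁻ y, g y ∂κ x ∂μ := lintegral_mono h
    _ = ∫⁻ y, g y ∂μ.bind κ := (Measure.lintegral_bind κ.aemeasurable hg.aemeasurable).symm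

theorem mass_sandwich_general
    (M : ℕ → Kernel X X)
    (c₀ : ℝ≥0∞)
    (ν₀ : Measure X)
    (hmin : ∀ x (f : X → ℝ≥0∞), Measurable f →
      c₀ * ((M 0 x) Set.univ) * ∫⁻ y, f y ∂ν₀ ≤ ∫⁻ y, f y ∂(M 0 x))
    (d₁ : ℝ≥0∞)
    (hmaj : ∀ j,
      d₁ * (⨆ x : X, (seqApply M 1 j (Measure.dirac x)) Set.univ)
        ≤ ∫⁻ x, (seqApply M 1 j (Measure.dirac x)) Set.univ ∂ν₀) :
    ∀ (μ : Measure X), IsFiniteMeasure μ → ∀ n : ℕ, 1 ≤ n →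
      c₀ * d₁ * ((seqApply M 0 1 μ) Set.univ)
          * (⨆ x : X, (seqApply M 1 (n - 1) (Measure.dirac x)) Set.univ)
        ≤ (seqApply M 0 n μ) Set.univ
      ∧ (seqApply M 0 n μ) Set.univ
        ≤ ((seqApply M 0 1 μ) Set.univ)
            * (⨆ x : X, (seqApply M 1 (n - 1) (Measure.dirac x)) Set.univ) := by
  intro μ _ n hn
  obtain ⟨m, rfl⟩ : ∃ m, n = m + 1 := ⟨n - 1, by omega⟩
  set g : X → ℝ≥0∞ := fun x ↦ seqApply M 1 m (Measure.dirac x) Set.univ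
  have hg : Measurable g := seqApply.measurable_dirac_univ M 1 m
  have hmass : seqApply M 0 (m + 1) μ Set.univ = ∫⁻ x, g x ∂seqApply M 0 1 μ := by
    rw [seqApply.succ_eq_seqApply_one, seqApply.univ_eq_lintegral]
  rw [Nat.add_sub_cancel, hmass]
  refine ⟨?_, mul_comm (⨆ x, g x) _ ▸ lintegral_le_iSup_mul g⟩
  have hM₀ : ∀ x, c₀ * d₁ * (⨆ y, g y) * M 0 x Set.univ ≤ ∫⁻ y, g y ∂M 0 x := fun x ↦
    calc c₀ * d₁ * (⨆ y, g y) * M 0 x Set.univ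
        = c₀ * M 0 x Set.univ * (d₁ * ⨆ y, g y) := by ring
      _ ≤ c₀ * M 0 x Set.univ * ∫⁻ y, g y ∂ν₀ := by gcongr; exact hmaj m
      _ ≤ ∫⁻ y, g y ∂M 0 x := hmin x g hg
  calc c₀ * d₁ * seqApply M 0 1 μ Set.univ * ⨆ x, g x
      = c₀ * d₁ * (⨆ y, g y) * μ.bind (M 0) Set.univ := by rw [mul_right_comm]; rfl
    _ ≤ ∫⁻ y, g y ∂μ.bind (M 0) := mul_bind_univ_le_lintegral_bind (M 0) μ hg hM₀

/-- Sandwich estimate: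
`c₀ d₁ ‖μM₀‖ sup_x m_{1,n}(x) ≤ ‖μ M_{0,n}‖ ≤ ‖μ M₀‖ sup_x m_{1,n}(x)`. -/
theorem mass_sandwich
    (M : ℕ → Kernel X X) (hfin : ∀ i, IsFiniteKernel (M i))
    (c₀ : ℝ≥0∞) (hc₀ : c₀ ≤ 1)
    (ν₀ : Measure X) [IsProbabilityMeasure ν₀]
    (hmin : ∀ x (f : X → ℝ≥0∞), Measurable f →
      c₀ * ((M 0 x) Set.univ) * ∫⁻ y, f y ∂ν₀ ≤ ∫⁻ y, f y ∂(M 0 x))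
    (d₁ : ℝ≥0∞) (hd₁ : d₁ ≤ 1)
    (hmaj : ∀ j,
      d₁ * (⨆ x : X, (seqApply M 1 j (Measure.dirac x)) Set.univ)
        ≤ ∫⁻ x, (seqApply M 1 j (Measure.dirac x)) Set.univ ∂ν₀) :
    ∀ (μ : Measure X), IsFiniteMeasure μ → ∀ n : ℕ, 1 ≤ n →
      c₀ * d₁ * ((seqApply M 0 1 μ) Set.univ)
          * (⨆ x : X, (seqApply M 1 (n - 1) (Measure.dirac x)) Set.univ)
        ≤ (seqApply M 0 n μ) Set.univ
      ∧ (seqApply M 0 n μ) Set.univ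
        ≤ ((seqApply M 0 1 μ) Set.univ)
            * (⨆ x : X, (seqApply M 1 (n - 1) (Measure.dirac x)) Set.univ) :=
  mass_sandwich_general M c₀ ν₀ hmin d₁ hmaj
end

section
/- Let (s_x^k, f_x^k) define infinite Leslie matrices M_k as above, with all m_{k,n}(x) > 0. Suppose d' ≥ 1 satisfies f_{x+i}^i ≤ d' f_i^i for all x, i ≥ 0, and d'' ≥ 1 satisfies s_x^0 s_{x+1}^1 ⋯ s_{x+i-1}^{i-1} ≤ d'' s_0^0 s_1^1 ⋯ s_{i-1}^{i-1} for all x ≥ 0, i ≥ 0 (including the full product i = n). Then for all n ≥ 1 and all x ≥ 0: m_{0,n}(x) ≤ d' d'' m_{0,n}(0), i.e., δ_0 (as ν) satisfies the minoration ν(m_{0,n}) ≥ (d'd'')^{-1} sup_x m_{0,n}(x). -/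
/-!
Unfolding the recursion until the first return to age `0` gives
`m_{0,n}(x) = ∑_{i<n} ℓ_i(x) f^i_{x+i} m_{i+1,n}(0) + ℓ_n(x)` with the survival products
`ℓ_i(x) = s^0_x ⋯ s^{i-1}_{x+i-1}`. Since `ℓ_i(x) ≤ d'' ℓ_i(0)` and `f^i_{x+i} ≤ d' f^i_i`, each
term at `x` is at most `d' d''` times the same term at `0`, and
`ℓ_n(x) ≤ d'' ℓ_n(0) ≤ d' d'' ℓ_n(0)`.
-/

/-- `leslieMass f s k j x = m_{k,k+j}(x)` for infinite Leslie matrices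
`M_k(x,0) = f k x`, `M_k(x,x+1) = s k x`. -/
noncomputable def leslieMass (f s : ℕ → ℕ → ℝ) : ℕ → ℕ → ℕ → ℝ
  | _, 0, _ => 1
  | k, j + 1, x =>
      f k x * leslieMass f s (k + 1) j 0 + s k x * leslieMass f s (k + 1) j (x + 1)

open Finset

variable {f s : ℕ → ℕ → ℝ}

@[simp] lemma leslieMass_zero (k x : ℕ) : leslieMass f s k 0 x = 1 := by rw [leslieMass]

lemma leslieMass_succ (k j x : ℕ) :
    leslieMass f s k (j + 1) x =
      f k x * leslieMass f s (k + 1) j 0 + s k x * leslieMass f s (k + 1) j (x + 1) := by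
  rw [leslieMass]

lemma leslieMass_nonneg (hf : ∀ k x, 0 ≤ f k x) (hs : ∀ k x, 0 ≤ s k x) (k j x : ℕ) :
    0 ≤ leslieMass f s k j x := by
  induction j generalizing k x with
  | zero => simp
  | succ j ih =>
    rw [leslieMass_succ]
    exact add_nonneg (mul_nonneg (hf k x) (ih _ _)) (mul_nonneg (hs k x) (ih _ _))

def leslieSurvival (s : ℕ → ℕ → ℝ) (k x i : ℕ) : ℝ := ∏ j ∈ range i, s (k + j) (x + j)

@[simp] lemma leslieSurvival_zero (k x : ℕ) : leslieSurvival s k x 0 = 1 := prod_range_zero _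

lemma leslieSurvival_succ (k x i : ℕ) :
    leslieSurvival s k x (i + 1) = s k x * leslieSurvival s (k + 1) (x + 1) i := by
  simp only [leslieSurvival, prod_range_succ', add_zero, add_right_comm _ 1, ← add_assoc, mul_comm]

lemma leslieSurvival_nonneg (hs : ∀ k x, 0 ≤ s k x) (k x i : ℕ) : 0 ≤ leslieSurvival s k x i :=
  prod_nonneg fun _ _ => hs _ _

lemma leslieMass_succ_eq_sum_add_leslieSurvival (n k x : ℕ) :
    leslieMass f s k (n + 1) x =
      ∑ i ∈ range (n + 1), leslieSurvival s k x i * f (k + i) (x + i) *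
          leslieMass f s (k + i + 1) (n - i) 0 +
        leslieSurvival s k x (n + 1) := by
  induction n generalizing k x with
  | zero => simp [leslieMass_succ, leslieSurvival_succ]
  | succ n ih =>
    rw [leslieMass_succ, ih (k + 1) (x + 1), sum_range_succ' _ (n + 1)]
    simp only [leslieSurvival_succ _ _ (n + 1), leslieSurvival_succ, ← add_assoc,
      add_right_comm _ 1, Nat.add_sub_add_right, mul_add, mul_sum, mul_assoc, add_zero,
      Nat.sub_zero, leslieSurvival_zero, one_mul]
    ring

theorem leslie_mass_comparison_general
    (f s : ℕ → ℕ → ℝ)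
    (hf : ∀ k x, 0 ≤ f k x) (hs : ∀ k x, 0 ≤ s k x)
    (d' : ℝ) (hd'1 : 1 ≤ d') (hd' : ∀ i x : ℕ, f i (x + i) ≤ d' * f i i)
    (d'' : ℝ)
    (hd'' : ∀ x i : ℕ,
      (∏ j ∈ Finset.range i, s j (x + j)) ≤ d'' * ∏ j ∈ Finset.range i, s j j) :
    ∀ n : ℕ, 1 ≤ n → ∀ x : ℕ,
      leslieMass f s 0 n x ≤ d' * d'' * leslieMass f s 0 n 0 := by
  have hsurv (x i : ℕ) : leslieSurvival s 0 x i ≤ d'' * leslieSurvival s 0 0 i := by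
    simpa only [leslieSurvival, zero_add] using hd'' x i
  have hsurv_nonneg (i : ℕ) : 0 ≤ d'' * leslieSurvival s 0 0 i :=
    (leslieSurvival_nonneg hs 0 0 i).trans (hsurv 0 i)
  have hstep (x i : ℕ) : leslieSurvival s 0 x i * f i (x + i) ≤
      d' * d'' * (leslieSurvival s 0 0 i * f i i) :=
    calc leslieSurvival s 0 x i * f i (x + i)
        ≤ (d'' * leslieSurvival s 0 0 i) * (d' * f i i) :=
          mul_le_mul (hsurv x i) (hd' i x) (hf _ _) (hsurv_nonneg i)
      _ = d' * d'' * (leslieSurvival s 0 0 i * f i i) := by ring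
  rintro _ hn x
  obtain ⟨n, rfl⟩ := Nat.exists_eq_add_of_le' hn
  rw [leslieMass_succ_eq_sum_add_leslieSurvival, leslieMass_succ_eq_sum_add_leslieSurvival,
    mul_add, mul_sum]
  simp only [zero_add]
  refine add_le_add (sum_le_sum fun i _ => ?_) ?_
  · rw [← mul_assoc]
    exact mul_le_mul_of_nonneg_right (hstep x i) (leslieMass_nonneg hf hs _ _ _)
  · calc leslieSurvival s 0 x (n + 1) ≤ 1 * (d'' * leslieSurvival s 0 0 (n + 1)) := by
          simpa only [one_mul] using hsurv x (n + 1)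
      _ ≤ d' * d'' * leslieSurvival s 0 0 (n + 1) := by
          rw [mul_assoc]
          exact mul_le_mul_of_nonneg_right hd'1 (hsurv_nonneg _)

/-- If `f_{x+i}^i ≤ d' f_i^i` and `s_x^0 ⋯ s_{x+i-1}^{i-1} ≤ d'' s_0^0 ⋯ s_{i-1}^{i-1}`
then `m_{0,n}(x) ≤ d' d'' m_{0,n}(0)` for all `n ≥ 1` and `x`, i.e. `ν = δ_0`
satisfies `ν(m_{0,n}) ≥ (d'd'')⁻¹ sup_x m_{0,n}(x)`. -/
theorem leslie_mass_comparison
    (f s : ℕ → ℕ → ℝ)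
    (hf : ∀ k x, 0 ≤ f k x) (hs : ∀ k x, 0 ≤ s k x)
    (hpos : ∀ k j x, 0 < leslieMass f s k j x)
    (d' : ℝ) (hd'1 : 1 ≤ d') (hd' : ∀ i x : ℕ, f i (x + i) ≤ d' * f i i)
    (d'' : ℝ) (hd''1 : 1 ≤ d'')
    (hd'' : ∀ x i : ℕ,
      (∏ j ∈ Finset.range i, s j (x + j)) ≤ d'' * ∏ j ∈ Finset.range i, s j j) :
    ∀ n : ℕ, 1 ≤ n → ∀ x : ℕ,
      leslieMass f s 0 n x ≤ d' * d'' * leslieMass f s 0 n 0 :=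
  leslie_mass_comparison_general f s hf hs d' hd'1 hd' d'' hd''
end

section
/- Let M be the infinite Leslie kernel on ℕ with entries M(x,0) = f_x > 0, M(x,x+1) = s_x ≥ 0, sup_x(f_x+s_x) < ∞. Let ν be a probability measure on ℕ and c ∈ [0,1]. If ν ≠ δ_0 then the minoration δ_x M(f) ≥ c (f_x + s_x) ν(f) for all x and all f ≥ 0 forces c = 0. If ν = δ_0, the minoration holds if and only if c ≤ inf_x f_x/(f_x + s_x) = (1 + sup_x s_x/f_x)^{-1}. -/
/-- Characterization of the Doeblin minoration `δ_x M ≥ c ‖δ_x M‖ ν` for the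
infinite Leslie kernel `δ_x M = f_x δ_0 + s_x δ_{x+1}` : if `ν ≠ δ_0` it forces
`c = 0`; if `ν = δ_0` it holds iff `c ≤ inf_x f_x/(f_x+s_x)`. -/
theorem leslie_minoration_characterization
    (f s : ℕ → ℝ) (hf : ∀ x, 0 < f x) (hs : ∀ x, 0 ≤ s x)
    (hbdd : ∃ C, ∀ x, f x + s x ≤ C)
    (ν : ℕ → ℝ) (hν0 : ∀ k, 0 ≤ ν k) (hν1 : HasSum ν 1)
    (c : ℝ) (hc0 : 0 ≤ c) (hc1 : c ≤ 1) :
    ((∃ k, k ≠ 0 ∧ 0 < ν k) →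
      ((∀ g : ℕ → ℝ, (∀ k, 0 ≤ g k) → (∃ C, ∀ k, g k ≤ C) →
          ∀ x, c * (f x + s x) * (∑' k, ν k * g k) ≤ f x * g 0 + s x * g (x + 1))
        → c = 0))
    ∧ (ν = (fun k => if k = 0 then (1 : ℝ) else 0) →
      ((∀ g : ℕ → ℝ, (∀ k, 0 ≤ g k) → (∃ C, ∀ k, g k ≤ C) →
          ∀ x, c * (f x + s x) * (∑' k, ν k * g k) ≤ f x * g 0 + s x * g (x + 1))
        ↔ c ≤ ⨅ x, f x / (f x + s x))) := by
  have hfs : ∀ x, 0 < f x + s x := fun x => by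
    have := hf x; have := hs x; linarith
  constructor
  · rintro ⟨k, hk0, hkpos⟩ hmin
    -- test on g = indicator of {k}
    set g : ℕ → ℝ := fun j => if j = k then (1 : ℝ) else 0 with hg
    have hgnn : ∀ j, 0 ≤ g j := fun j => by
      simp only [hg]; split <;> norm_num
    have hgb : ∃ C, ∀ j, g j ≤ C := ⟨1, fun j => by simp only [hg]; split <;> norm_num⟩
    have htsum : (∑' j, ν j * g j) = ν k := by
      rw [tsum_eq_single k]
      · simp [hg]
      · intro j hj; simp [hg, hj]
    have h := hmin g hgnn hgb k
    rw [htsum] at h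
    have hg0 : g 0 = 0 := by simp [hg, Ne.symm hk0]
    have hgk1 : g (k + 1) = 0 := by simp [hg]
    rw [hg0, hgk1] at h
    have : c * (f k + s k) * ν k ≤ 0 := by linarith
    have hc : ¬ 0 < c := fun hcp =>
      absurd this (not_le.mpr (mul_pos (mul_pos hcp (hfs k)) hkpos))
    linarith [not_lt.mp hc]
  · intro hν
    have hdiv : ∀ x, 0 < f x / (f x + s x) := fun x => div_pos (hf x) (hfs x)
    constructor
    · intro hmin
      apply le_ciInf
      intro x
      set g : ℕ → ℝ := fun j => if j = 0 then (1 : ℝ) else 0 with hg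
      have hgnn : ∀ j, 0 ≤ g j := fun j => by
        simp only [hg]; split <;> norm_num
      have hgb : ∃ C, ∀ j, g j ≤ C := ⟨1, fun j => by simp only [hg]; split <;> norm_num⟩
      have htsum : (∑' j, ν j * g j) = 1 := by
        rw [hν, tsum_eq_single 0] <;> simp [hg]
      have h := hmin g hgnn hgb x
      rw [htsum] at h
      have hg0 : g 0 = 1 := by simp [hg]
      have hgx : g (x + 1) = 0 := by simp [hg]
      rw [hg0, hgx] at h
      rw [le_div_iff₀ (hfs x)]
      linarith
    · intro hci g hgnn hgb x
      have hcx : c ≤ f x / (f x + s x) :=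
        hci.trans (ciInf_le ⟨0, by rintro y ⟨x, rfl⟩; exact (hdiv x).le⟩ x)
      have h1 : c * (f x + s x) ≤ f x := by
        rw [le_div_iff₀ (hfs x)] at hcx; linarith
      have htsum : (∑' j, ν j * g j) = g 0 := by
        rw [hν, tsum_eq_single 0]
        · simp
        · intro j hj; simp [hj]
      rw [htsum]
      have hg0 := hgnn 0
      have := mul_nonneg (hs x) (hgnn (x + 1))
      nlinarith
end

section
/- Let δ ∈ (0,1), c = δ, a > 1, α ∈ (0,1), and (ε_x)_{x≥0} ∈ {0,1}^ℕ with partial sums S_x = ∑_{k<x} ε_k satisfying S_x ≤ αx for all x. Consider the constant infinite Leslie matrix M with f_x = δ m(x), s_x = (1−δ) m(x), where m(x) = 1 + (a−1)ε_x, and let m_{0,n}(x) = (M^n 1)(x). Then m_{0,n}(0) ≤ (2 a^α)^n for all n ≥ 1. -/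
open Finset

theorem leslieMass_le_of_supersolution {f s : ℕ → ℕ → ℝ} (B : ℕ → ℕ → ℕ → ℝ)
    (hf : ∀ k x, 0 ≤ f k x) (hs : ∀ k x, 0 ≤ s k x)
    (hB₀ : ∀ k x, 1 ≤ B k 0 x)
    (hB : ∀ k j x, f k x * B (k + 1) j 0 + s k x * B (k + 1) j (x + 1) ≤ B k (j + 1) x)
    (k j x : ℕ) : leslieMass f s k j x ≤ B k j x := by
  induction j generalizing k x with
  | zero => exact hB₀ k x
  | succ j ih =>
    calc leslieMass f s k (j + 1) x
        = f k x * leslieMass f s (k + 1) j 0 + s k x * leslieMass f s (k + 1) j (x + 1) := rfl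
      _ ≤ f k x * B (k + 1) j 0 + s k x * B (k + 1) j (x + 1) := by
        gcongr
        exacts [hf k x, ih _ _, hs k x, ih _ _]
      _ ≤ B k (j + 1) x := hB k j x

theorem one_add_sub_one_mul_eq_rpow (a : ℝ) {e : ℕ} (he : e ≤ 1) :
    1 + (a - 1) * e = a ^ (e : ℝ) := by
  interval_cases e <;> simp

theorem leslieMass_le_rpow_of_sum_le (δ a α : ℝ) (hδ : δ ∈ Set.Icc (0 : ℝ) 1)
    (ha : 1 ≤ a) (ε : ℕ → ℕ) (hε : ∀ x, ε x ≤ 1)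
    (hS : ∀ x : ℕ, (∑ k ∈ range x, (ε k : ℝ)) ≤ α * x) (k j x : ℕ) :
    leslieMass (fun _ x => δ * (1 + (a - 1) * ε x))
        (fun _ x => (1 - δ) * (1 + (a - 1) * ε x)) k j x
      ≤ a ^ (α * (x + j) - ∑ i ∈ range x, (ε i : ℝ)) := by
  obtain ⟨hδ₀, hδ₁⟩ := hδ
  have ha₀ : 0 < a := by linarith
  have hm : ∀ x, 1 + (a - 1) * ε x = a ^ (ε x : ℝ) := fun x =>
    one_add_sub_one_mul_eq_rpow a (hε x)
  refine leslieMass_le_of_supersolution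
    (fun _ j x => a ^ (α * (x + j) - ∑ i ∈ range x, (ε i : ℝ)))
    (fun _ x => by rw [hm]; positivity)
    (fun _ x => by rw [hm]; exact mul_nonneg (by linarith) (by positivity))
    (fun _ x => Real.one_le_rpow ha (by simpa using hS x)) (fun _ j x => ?_) k j x
  set E := α * (x + (j + 1 : ℕ)) - ∑ i ∈ range x, (ε i : ℝ)
  have hSx := sum_range_succ (fun i => (ε i : ℝ)) x
  have hfertile :
      a ^ (ε x : ℝ) * a ^ (α * ((0 : ℕ) + j) - ∑ i ∈ range 0, (ε i : ℝ))
        ≤ a ^ E := by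
    rw [← Real.rpow_add ha₀]
    refine Real.rpow_le_rpow_of_exponent_le ha ?_
    have := hS (x + 1)
    rw [hSx] at this
    simp only [E, range_zero, sum_empty]
    push_cast at this ⊢
    linarith
  have hsurvive :
      a ^ (ε x : ℝ) * a ^ (α * ((x + 1 : ℕ) + j) - ∑ i ∈ range (x + 1), (ε i : ℝ))
        = a ^ E := by
    rw [← Real.rpow_add ha₀, hSx]
    simp only [E]
    push_cast
    ring_nf
  simp only [hm, mul_assoc]
  rw [hsurvive]
  linarith [mul_le_mul_of_nonneg_left hfertile hδ₀]

theorem leslie_counterexample_upper_bound_general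
    (δ a α : ℝ) (hδ : δ ∈ Set.Ioo (0 : ℝ) 1) (ha : 1 < a)
    (ε : ℕ → ℕ) (hε : ∀ x, ε x ≤ 1)
    (hS : ∀ x : ℕ, (∑ k ∈ Finset.range x, (ε k : ℝ)) ≤ α * x) :
    ∀ n : ℕ, 1 ≤ n →
      leslieMass (fun _ x => δ * (1 + (a - 1) * ε x))
          (fun _ x => (1 - δ) * (1 + (a - 1) * ε x)) 0 n 0
        ≤ (2 * a ^ α) ^ n := by
  intro n _
  have hpos : 0 < a ^ α := Real.rpow_pos_of_pos (by linarith) α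
  calc leslieMass (fun _ x => δ * (1 + (a - 1) * ε x))
        (fun _ x => (1 - δ) * (1 + (a - 1) * ε x)) 0 n 0
      ≤ a ^ (α * n) := by
        simpa using
          leslieMass_le_rpow_of_sum_le δ a α (Set.Ioo_subset_Icc_self hδ) ha.le ε hε hS 0 n 0
    _ = (a ^ α) ^ n := Real.rpow_mul_natCast (by linarith) α n
    _ ≤ (2 * a ^ α) ^ n := by gcongr; linarith

/-- For the constant Leslie matrix with `f_x = δ m(x)`, `s_x = (1-δ) m(x)`,
`m(x) = 1 + (a-1) ε_x`, where the 0-1 sequence `ε` has partial sums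
`S_x ≤ α x`, one has `m_{0,n}(0) = (Mⁿ 1)(0) ≤ (2 a^α)ⁿ`. -/
theorem leslie_counterexample_upper_bound
    (δ a α : ℝ) (hδ : δ ∈ Set.Ioo (0 : ℝ) 1) (ha : 1 < a)
    (hα : α ∈ Set.Ioo (0 : ℝ) 1)
    (ε : ℕ → ℕ) (hε : ∀ x, ε x ≤ 1)
    (hS : ∀ x : ℕ, (∑ k ∈ Finset.range x, (ε k : ℝ)) ≤ α * x) :
    ∀ n : ℕ, 1 ≤ n →
      leslieMass (fun _ x => δ * (1 + (a - 1) * ε x))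
          (fun _ x => (1 - δ) * (1 + (a - 1) * ε x)) 0 n 0
        ≤ (2 * a ^ α) ^ n :=
  leslie_counterexample_upper_bound_general δ a α hδ ha ε hε hS
end
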